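/- For every nonnegative integer L, every integer a, and every nonzero complex number q that is not a root of unity, with a fixed square root q^{1/2}, Σ_{i≥0} q^{C(i+1,2)} [L choose i]_q · { T_{-1}(i, a; q) + T_{-1}(i, a+1; q) } = q^{C(a+1,2)} [2L+1 choose L-a]_q, where C(a,2) = a(a-1)/2 denotes the binomial coefficient. -/

import Mathlib

/-- The finite q-Pochhammer symbol `(a;q)_n`. -/
noncomputable def qPoch (a q : ℂ) (n : ℕ) : ℂ :=
  ∏ j ∈ Finset.range n, (1 - a * q ^ j)

/-- The infinite q-Pochhammer symbol `(a;q)_∞`. -/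
noncomputable def qPochInf (a q : ℂ) : ℂ :=
  ∏' j : ℕ, (1 - a * q ^ j)

/-- `1/(q;q)_n` for an integer `n`, with the convention that it is `0` for `n < 0`. -/
noncomputable def qPochInvZ (q : ℂ) (n : ℤ) : ℂ :=
  if 0 ≤ n then (qPoch q q n.toNat)⁻¹ else 0

/-- The q-trinomial coefficient `(L, b; a; q)_2`. -/
noncomputable def qTrinomial (L : ℕ) (b a : ℤ) (q : ℂ) : ℂ :=
  ∑' n : ℕ, q ^ ((n : ℤ) * ((n : ℤ) + b)) * qPoch q q L * qPochInvZ q (n : ℤ) *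
    qPochInvZ q ((n : ℤ) + a) * qPochInvZ q ((L : ℤ) - 2 * (n : ℤ) - a)

/-- The q-trinomial coefficient `T_n(L, a; q)`, where `s` is a fixed square root of `q`. -/
noncomputable def qTriT (n : ℤ) (L : ℕ) (a : ℤ) (q s : ℂ) : ℂ :=
  s ^ ((L : ℤ) * ((L : ℤ) - n) - a * (a - n)) * qTrinomial L (a - n) a q⁻¹

/-- The Gaussian (q-binomial) coefficient `[N choose k]_q`, zero unless `0 ≤ k ≤ N`. -/
noncomputable def qBinom (N k : ℤ) (q : ℂ) : ℂ :=
  if 0 ≤ k ∧ k ≤ N then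
    qPoch q q N.toNat * (qPoch q q k.toNat)⁻¹ * (qPoch q q (N - k).toNat)⁻¹
  else 0

/-- The quadratic form `Q(m,n) = 2m² + 6mn + 6n²` from Capparelli's theorems. -/
def Qcap (m n : ℕ) : ℕ := 2 * m ^ 2 + 6 * m * n + 6 * n ^ 2

/-!
Write `1/(q;q)_m` for every integer `m` (zero for `m < 0`). Inverting the base,
`(q⁻¹;q⁻¹)_m = (-1)^m q^(-m(m+1)/2) (q;q)_m`, turns `q^C(i+1,2) T₋₁(i,c;q)` into
`q^C(c+1,2) (q;q)_i Σ_n q^(j(j+c+1) + n(n+c)) / ((q;q)_n (q;q)_(n+c) (q;q)_(j-n))`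
with `j = i - n - c`. After multiplying by `[L choose i]_q`, summing over `i` and substituting
`i = j + n + c`, the sum over `n` is a q-Chu–Vandermonde sum
`Σ_n q^(n(n+k)) / ((q;q)_n (q;q)_(n+k) (q;q)_(c-n) (q;q)_(d-n))
  = (q;q)_(c+d+k) / ((q;q)_c (q;q)_d (q;q)_(c+k) (q;q)_(d+k))`.
The resulting sums for `c = a` and `c = a + 1` merge by the q-Pascal rule into one sum of the same
shape, and a second q-Chu–Vandermonde evaluation gives `[2L+1 choose L-a]_q`.
-/

open Finset

theorem sum_range_eq_finsum {M : Type*} [AddCommMonoid M] {f : ℤ → M} {N : ℕ}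
    (hf : ∀ i, f i ≠ 0 → 0 ≤ i ∧ i < N) : ∑ i ∈ range N, f i = ∑ᶠ i, f i := by
  rw [finsum_eq_sum_of_support_subset f (s := (range N).map Nat.castEmbedding), sum_map]
  · rfl
  intro i hi
  obtain ⟨h0, hN⟩ := hf i hi
  lift i to ℕ using h0
  simpa using hN

theorem sum_range_comp_sub {M : Type*} [AddCommMonoid M] {f : ℤ → M} {N N' : ℕ} (c : ℤ)
    (hf : ∀ i, f (i - c) ≠ 0 → 0 ≤ i ∧ i < N) (hf' : ∀ j, f j ≠ 0 → 0 ≤ j ∧ j < N') :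
    ∑ i ∈ range N, f (i - c) = ∑ j ∈ range N', f j := by
  rw [sum_range_eq_finsum hf, sum_range_eq_finsum hf']
  exact finsum_comp_equiv (Equiv.subRight c)

section

variable {q s : ℂ}

theorem qPoch_self_succ (q : ℂ) (n : ℕ) : qPoch q q (n + 1) = qPoch q q n * (1 - q ^ (n + 1)) := by
  rw [qPoch, prod_range_succ, ← qPoch, pow_succ']

theorem qPoch_self_toNat_succ (q : ℂ) {m : ℤ} (hm : 0 ≤ m) :
    qPoch q q (m + 1).toNat = qPoch q q m.toNat * (1 - q ^ (m + 1)) := by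
  lift m to ℕ using hm
  rw [show (m : ℤ) + 1 = (m + 1 : ℕ) by push_cast; ring, Int.toNat_natCast, Int.toNat_natCast,
    zpow_natCast, qPoch_self_succ]

theorem one_sub_zpow_ne_zero (hroot : ∀ k : ℕ, 0 < k → q ^ k ≠ 1) {k : ℤ} (hk : 0 < k) :
    1 - q ^ k ≠ 0 := by
  lift k to ℕ using hk.le
  rw [zpow_natCast]
  exact sub_ne_zero.2 (hroot k (by exact_mod_cast hk)).symm

theorem qPoch_self_ne_zero (hroot : ∀ k : ℕ, 0 < k → q ^ k ≠ 1) (n : ℕ) : qPoch q q n ≠ 0 := by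
  refine prod_ne_zero_iff.2 fun j _ => ?_
  rw [← pow_succ']
  exact sub_ne_zero.2 (hroot (j + 1) j.succ_pos).symm

theorem qPochInvZ_of_neg {m : ℤ} (hm : m < 0) : qPochInvZ q m = 0 := if_neg hm.not_ge

theorem qPochInvZ_natCast (n : ℕ) : qPochInvZ q n = (qPoch q q n)⁻¹ := by
  simp [qPochInvZ]

theorem qPochInvZ_zero : qPochInvZ q 0 = 1 := by
  simp [qPochInvZ, qPoch]

theorem qPoch_mul_qPochInvZ (hroot : ∀ k : ℕ, 0 < k → q ^ k ≠ 1) (n : ℕ) :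
    qPoch q q n * qPochInvZ q n = 1 := by
  rw [qPochInvZ_natCast, mul_inv_cancel₀ (qPoch_self_ne_zero hroot n)]

theorem qPoch_toNat_mul_qPochInvZ (hroot : ∀ k : ℕ, 0 < k → q ^ k ≠ 1) {m : ℤ} (hm : 0 ≤ m) :
    qPoch q q m.toNat * qPochInvZ q m = 1 := by
  simpa [Int.toNat_of_nonneg hm] using qPoch_mul_qPochInvZ hroot m.toNat

theorem qPochInvZ_eq_zero_iff (hroot : ∀ k : ℕ, 0 < k → q ^ k ≠ 1) {m : ℤ} :
    qPochInvZ q m = 0 ↔ m < 0 := by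
  refine ⟨fun h => not_le.1 fun hm => ?_, qPochInvZ_of_neg⟩
  lift m to ℕ using hm
  exact inv_ne_zero (qPoch_self_ne_zero hroot m) (by rwa [← qPochInvZ_natCast])

theorem qPochInvZ_eq_mul_succ (hroot : ∀ k : ℕ, 0 < k → q ^ k ≠ 1) (m : ℤ) :
    qPochInvZ q m = (1 - q ^ (m + 1)) * qPochInvZ q (m + 1) := by
  obtain hm | rfl | hm := lt_trichotomy m (-1)
  · rw [qPochInvZ_of_neg (by omega), qPochInvZ_of_neg (by omega), mul_zero]
  · simp [qPochInvZ_of_neg]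
  · lift m to ℕ using (by omega)
    rw [show (m : ℤ) + 1 = (m + 1 : ℕ) by push_cast; ring, zpow_natCast, qPochInvZ_natCast,
      qPochInvZ_natCast, qPoch_self_succ, mul_inv, mul_left_comm,
      mul_inv_cancel₀ (sub_ne_zero.2 (hroot (m + 1) m.succ_pos).symm), mul_one]

theorem qPochInvZ_pascal (hq : q ≠ 0) (hroot : ∀ k : ℕ, 0 < k → q ^ k ≠ 1) (N n : ℤ) :
    (1 - q ^ N) * (qPochInvZ q n * qPochInvZ q (N - n)) =
      qPochInvZ q (n - 1) * qPochInvZ q (N - n) +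
        q ^ n * (qPochInvZ q n * qPochInvZ q (N - 1 - n)) := by
  have h1 := qPochInvZ_eq_mul_succ hroot (n - 1)
  have h2 := qPochInvZ_eq_mul_succ hroot (N - 1 - n)
  rw [sub_add_cancel] at h1
  rw [show N - 1 - n + 1 = N - n by ring] at h2
  have h3 : q ^ n * q ^ (N - n) = q ^ N := by rw [← zpow_add₀ hq, add_sub_cancel]
  rw [h1, h2]
  linear_combination qPochInvZ q n * qPochInvZ q (N - n) * h3

theorem qPochInvZ_pascal' (hq : q ≠ 0) (hroot : ∀ k : ℕ, 0 < k → q ^ k ≠ 1) (N n : ℤ) :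
    (1 - q ^ N) * (qPochInvZ q n * qPochInvZ q (N - n)) =
      q ^ (N - n) * (qPochInvZ q (n - 1) * qPochInvZ q (N - n)) +
        qPochInvZ q n * qPochInvZ q (N - 1 - n) := by
  have h := qPochInvZ_pascal hq hroot N (N - n)
  rw [sub_sub_cancel, show N - 1 - (N - n) = n - 1 by ring, show N - n - 1 = N - 1 - n by ring] at h
  linear_combination h

noncomputable def chuTerm (q : ℂ) (k c d n : ℤ) : ℂ :=
  q ^ (n * (n + k)) *
    (qPochInvZ q n * qPochInvZ q (n + k) * qPochInvZ q (c - n) * qPochInvZ q (d - n))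

-- The `toNat` is harmless: if `c + d + k < 0` then `c < 0` or `d + k < 0`, so a factor vanishes.
noncomputable def chuValue (q : ℂ) (k c d : ℤ) : ℂ :=
  qPoch q q (c + d + k).toNat *
    (qPochInvZ q c * qPochInvZ q d * qPochInvZ q (c + k) * qPochInvZ q (d + k))

theorem chuTerm_pascal (hq : q ≠ 0) (hroot : ∀ k : ℕ, 0 < k → q ^ k ≠ 1) (k c d n : ℤ) :
    (1 - q ^ (c + 1)) * chuTerm q k (c + 1) d n =
      q ^ (c + k + 1) * chuTerm q (k + 1) c (d - 1) (n - 1) + chuTerm q k c d n := by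
  have h := qPochInvZ_pascal' hq hroot (c + 1) n
  rw [add_sub_cancel_right] at h
  have hpow : q ^ (c + k + 1) * q ^ ((n - 1) * (n + k)) = q ^ (n * (n + k)) * q ^ (c + 1 - n) := by
    simp only [← zpow_add₀ hq]; ring_nf
  simp only [chuTerm]
  rw [show n - 1 + (k + 1) = n + k by ring, show c - (n - 1) = c + 1 - n by ring,
    show d - 1 - (n - 1) = d - n by ring]
  linear_combination qPochInvZ q (n + k) * qPochInvZ q (d - n) *
    (q ^ (n * (n + k)) * h - qPochInvZ q (n - 1) * qPochInvZ q (c + 1 - n) * hpow)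

theorem chuValue_succ (hq : q ≠ 0) (hroot : ∀ k : ℕ, 0 < k → q ^ k ≠ 1) {c : ℤ} (hc : 0 ≤ c)
    (k d : ℤ) :
    q ^ (c + k + 1) * chuValue q (k + 1) c (d - 1) + chuValue q k c d =
      (1 - q ^ (c + 1)) * chuValue q k (c + 1) d := by
  simp only [chuValue]
  rw [show c + (d - 1) + (k + 1) = c + d + k by ring, show d - 1 + (k + 1) = d + k by ring,
    show c + 1 + d + k = c + d + k + 1 by ring, show c + (k + 1) = c + k + 1 by ring,
    show c + 1 + k = c + k + 1 by ring]
  obtain hM | hM := lt_or_ge (c + d + k) 0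
  · simp [qPochInvZ_of_neg (show d + k < 0 by omega)]
  have hc := qPochInvZ_eq_mul_succ hroot c
  have hpascal := qPochInvZ_pascal hq hroot (c + d + k + 1) (c + k + 1)
  rw [show c + d + k + 1 - (c + k + 1) = d by ring, add_sub_cancel_right,
    show c + d + k + 1 - 1 - (c + k + 1) = d - 1 by ring] at hpascal
  rw [qPoch_self_toNat_succ q hM]
  linear_combination qPoch q q (c + d + k).toNat * qPochInvZ q (d + k) *
    (qPochInvZ q (c + k + 1) * qPochInvZ q d * (1 - q ^ (c + d + k + 1)) * hc -
      qPochInvZ q c * hpascal)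

theorem sum_range_chuTerm (hq : q ≠ 0) (hroot : ∀ k : ℕ, 0 < k → q ^ k ≠ 1) (c : ℕ) :
    ∀ k d : ℤ, ∑ n ∈ range (c + 1), chuTerm q k c d n = chuValue q k c d := by
  induction c with
  | zero =>
    intro k d
    obtain hk | hk := lt_or_ge k 0
    · simp [chuTerm, chuValue, qPochInvZ_of_neg hk]
    obtain hd | hd := lt_or_ge d 0
    · simp [chuTerm, chuValue, qPochInvZ_of_neg hd]
    have h := qPoch_toNat_mul_qPochInvZ hroot (by omega : 0 ≤ d + k)
    simp only [chuTerm, chuValue, zero_add, range_one, sum_singleton, CharP.cast_eq_zero, zero_mul,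
      zpow_zero, sub_zero, qPochInvZ_zero]
    linear_combination -qPochInvZ q k * qPochInvZ q d * h
  | succ c ih =>
    intro k d
    push_cast
    apply mul_left_cancel₀ (one_sub_zpow_ne_zero hroot (by omega : (0 : ℤ) < c + 1))
    rw [← chuValue_succ hq hroot (Int.natCast_nonneg c), ← ih, ← ih, mul_sum,
      sum_congr rfl fun (n : ℕ) _ => chuTerm_pascal hq hroot k c d n, sum_add_distrib, ← mul_sum,
      sum_range_succ', sum_range_succ _ (c + 1)]
    simp [chuTerm, qPochInvZ_of_neg]

theorem qChuVandermonde (hq : q ≠ 0) (hroot : ∀ k : ℕ, 0 < k → q ^ k ≠ 1) {c N : ℕ} (hN : c < N)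
    (k d : ℤ) : ∑ n ∈ range N, chuTerm q k c d n = chuValue q k c d := by
  rw [eventually_constant_sum (N := c + 1) (fun n hn => ?_) hN, sum_range_chuTerm hq hroot]
  rw [chuTerm, qPochInvZ_of_neg (by omega : (c : ℤ) - n < 0), mul_zero, zero_mul, mul_zero]

theorem zpow_two_mul_of_sq_eq (hs : s ^ 2 = q) (z : ℤ) : s ^ (2 * z) = q ^ z := by
  rw [zpow_mul, ← hs]
  norm_cast

theorem qPoch_inv_self (hq : q ≠ 0) (hs : s ^ 2 = q) (m : ℕ) :
    qPoch q⁻¹ q⁻¹ m = (-1) ^ (m : ℤ) * s ^ (-((m : ℤ) * (m + 1))) * qPoch q q m := by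
  have hs0 : s ≠ 0 := ne_zero_pow two_ne_zero (hs ▸ hq)
  induction m with
  | zero => simp [qPoch]
  | succ m ih =>
    rw [qPoch, prod_range_succ, ← qPoch, ih, qPoch_self_succ, ← pow_succ', inv_pow]
    have hfactor : 1 - (q ^ (m + 1))⁻¹ = -(q ^ (m + 1))⁻¹ * (1 - q ^ (m + 1)) := by
      field_simp
      ring
    have hexp : s ^ (-(((m + 1 : ℕ) : ℤ) * ((m + 1 : ℕ) + 1))) =
        s ^ (-((m : ℤ) * (m + 1))) * (q ^ (m + 1))⁻¹ := by
      rw [← zpow_natCast q, ← zpow_two_mul_of_sq_eq hs, ← zpow_neg, ← zpow_add₀ hs0]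
      push_cast; ring_nf
    rw [hfactor, hexp, Nat.cast_succ, zpow_add_one₀ (by norm_num)]
    ring

theorem qPochInvZ_inv (hq : q ≠ 0) (hs : s ^ 2 = q) (m : ℤ) :
    qPochInvZ q⁻¹ m = (-1) ^ m * s ^ (m * (m + 1)) * qPochInvZ q m := by
  obtain hm | hm := lt_or_ge m 0
  · simp [qPochInvZ_of_neg hm]
  lift m to ℕ using hm
  rw [qPochInvZ_natCast, qPochInvZ_natCast, qPoch_inv_self hq hs, mul_inv, mul_inv, zpow_neg,
    inv_inv, ← inv_zpow, inv_neg, inv_one]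

theorem zpow_mul_qTriT_neg_one (hq : q ≠ 0) (hs : s ^ 2 = q) {i N : ℕ} {c : ℤ}
    (hN : (i : ℤ) - c < 2 * N) :
    s ^ ((i : ℤ) * (i + 1)) * qTriT (-1) i c q s =
      s ^ (c * (c + 1)) * qPoch q q i *
        ∑ n ∈ range N, q ^ (((i : ℤ) - n - c) * (i - n + 1)) * q ^ ((n : ℤ) * (n + c)) *
          (qPochInvZ q n * qPochInvZ q (n + c) * qPochInvZ q (i - 2 * n - c)) := by
  have hs0 : s ≠ 0 := ne_zero_pow two_ne_zero (hs ▸ hq)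
  rw [qTriT, qTrinomial, tsum_eq_sum (s := range N) fun n hn => ?vanish, mul_sum, mul_sum, mul_sum]
  case vanish =>
    rw [qPochInvZ_of_neg (m := (i : ℤ) - 2 * n - c) (by simp at hn; omega), mul_zero]
  refine sum_congr rfl fun n _ => ?_
  rw [qPochInvZ_inv hq hs, qPochInvZ_inv hq hs, qPochInvZ_inv hq hs, qPoch_inv_self hq hs,
    inv_zpow', ← zpow_two_mul_of_sq_eq hs, ← zpow_two_mul_of_sq_eq hs, ← zpow_two_mul_of_sq_eq hs]
  have hsign : (-1 : ℂ) ^ (i : ℤ) * (-1) ^ (n : ℤ) * (-1) ^ ((n : ℤ) + c) *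
      (-1) ^ ((i : ℤ) - 2 * n - c) = 1 := by
    simp only [← zpow_add₀ (show (-1 : ℂ) ≠ 0 by norm_num)]
    exact Even.neg_one_zpow ⟨i, by ring⟩
  calc _ = ((-1) ^ (i : ℤ) * (-1) ^ (n : ℤ) * (-1) ^ ((n : ℤ) + c) * (-1) ^ ((i : ℤ) - 2 * n - c)) *
        (s ^ ((i : ℤ) * (i + 1)) * s ^ ((i : ℤ) * (i - -1) - c * (c - -1)) *
          s ^ (2 * -((n : ℤ) * (n + (c - -1)))) * s ^ (-((i : ℤ) * (i + 1))) *
          s ^ ((n : ℤ) * (n + 1)) * s ^ (((n : ℤ) + c) * (n + c + 1)) *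
          s ^ (((i : ℤ) - 2 * n - c) * (i - 2 * n - c + 1))) *
        (qPoch q q i * (qPochInvZ q n * qPochInvZ q (n + c) * qPochInvZ q (i - 2 * n - c))) := by
        ring
    _ = (s ^ (c * (c + 1)) * s ^ (2 * (((i : ℤ) - n - c) * (i - n + 1))) *
          s ^ (2 * ((n : ℤ) * (n + c)))) *
        (qPoch q q i * (qPochInvZ q n * qPochInvZ q (n + c) * qPochInvZ q (i - 2 * n - c))) := by
        rw [hsign, one_mul]
        simp only [← zpow_add₀ hs0]
        ring_nf
    _ = _ := by ring

theorem qBinom_eq_mul_qPochInvZ (N k : ℤ) :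
    qBinom N k q = qPoch q q N.toNat * (qPochInvZ q k * qPochInvZ q (N - k)) := by
  unfold qBinom
  split_ifs with h
  · rw [qPochInvZ, if_pos h.1, qPochInvZ, if_pos (by omega)]
    ring
  · obtain hk | hk := lt_or_ge k 0
    · simp [qPochInvZ_of_neg hk]
    · simp [qPochInvZ_of_neg (by omega : N - k < 0)]

theorem qBinom_mul_qPoch (hroot : ∀ k : ℕ, 0 < k → q ^ k ≠ 1) (L i : ℕ) :
    qBinom L i q * qPoch q q i = qPoch q q L * qPochInvZ q (L - i) := by
  rw [qBinom_eq_mul_qPochInvZ, Int.toNat_natCast]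
  linear_combination qPoch q q L * qPochInvZ q (L - i) * qPoch_mul_qPochInvZ hroot i

theorem zpow_triangle (hs : s ^ 2 = q) (a : ℤ) : q ^ ((a + 1) * a / 2) = s ^ (a * (a + 1)) := by
  obtain ⟨m, hm⟩ := Int.even_mul_succ_self a
  rw [mul_comm, hm, show (m + m) / 2 = m by omega, ← two_mul, zpow_two_mul_of_sq_eq hs]

theorem pow_triangle (hs : s ^ 2 = q) (m : ℕ) :
    q ^ ((m + 1) * m / 2) = s ^ ((m : ℤ) * (m + 1)) := by
  rw [← zpow_triangle hs, ← zpow_natCast]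
  push_cast
  rfl

theorem pow_mul_qBinom_mul_qTriT_neg_one (hq : q ≠ 0) (hroot : ∀ k : ℕ, 0 < k → q ^ k ≠ 1)
    (hs : s ^ 2 = q) {L i N : ℕ} {c : ℤ} (hN : (i : ℤ) - c < 2 * N) :
    q ^ ((i + 1) * i / 2) * qBinom L i q * qTriT (-1) i c q s =
      s ^ (c * (c + 1)) * (qPoch q q L * qPochInvZ q (L - i) *
        ∑ n ∈ range N, q ^ (((i : ℤ) - n - c) * (i - n + 1)) * q ^ ((n : ℤ) * (n + c)) *
          (qPochInvZ q n * qPochInvZ q (n + c) * qPochInvZ q (i - 2 * n - c))) := by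
  rw [pow_triangle hs, mul_right_comm, zpow_mul_qTriT_neg_one hq hs hN, ← qBinom_mul_qPoch hroot]
  ring

theorem sum_qBinom_mul_qTriT_neg_one (hq : q ≠ 0) (hroot : ∀ k : ℕ, 0 < k → q ^ k ≠ 1)
    (hs : s ^ 2 = q) (L : ℕ) (c : ℤ) :
    ∑ i ∈ range (L + 1), q ^ ((i + 1) * i / 2) * qBinom L i q * qTriT (-1) i c q s =
      s ^ (c * (c + 1)) * qPoch q q L ^ 2 * ∑ j ∈ range (L + 1), q ^ ((j : ℤ) * (j + c + 1)) *
        (qPochInvZ q j * qPochInvZ q (L - j - c) * qPochInvZ q (j + c) * qPochInvZ q (L - j)) := by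
  set N := L + c.natAbs + 1
  set G : ℤ → ℤ → ℂ := fun j n => q ^ (j * (j + c + 1)) * chuTerm q c j (L - j - c) n
  have hterm : ∀ i ∈ range (L + 1), q ^ ((i + 1) * i / 2) * qBinom L i q * qTriT (-1) i c q s =
      s ^ (c * (c + 1)) * (qPoch q q L * ∑ n ∈ range N, G (i - (n + c)) n) := by
    intro i hi
    rw [mem_range] at hi
    rw [pow_mul_qBinom_mul_qTriT_neg_one hq hroot hs (i := i) (c := c) (N := N) (by omega)]
    congr 1
    rw [mul_sum, mul_sum]
    refine sum_congr rfl fun n _ => ?_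
    simp only [G, chuTerm]
    rw [show (i : ℤ) - (n + c) + c + 1 = i - n + 1 by ring,
      show (i : ℤ) - (n + c) - n = i - 2 * n - c by ring,
      show (L : ℤ) - (i - (n + c)) - c - n = L - i by ring,
      show (i : ℤ) - (n + c) = i - n - c by ring]
    ring
  have hshift : ∀ n : ℕ, ∑ i ∈ range (L + 1), G (i - (n + c)) n = ∑ j ∈ range (L + 1), G j n := by
    intro n
    refine sum_range_comp_sub (f := fun j => G j n) _ (fun i h => ?_) (fun i h => ?_) <;>
    · simp only [G, chuTerm, ne_eq, mul_eq_zero, zpow_ne_zero _ hq, qPochInvZ_eq_zero_iff hroot, false_or,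
        not_or, not_lt] at h
      omega
  have hchu : ∀ j ∈ range (L + 1), ∑ n ∈ range N, G j n =
      q ^ ((j : ℤ) * (j + c + 1)) * (qPoch q q L *
        (qPochInvZ q j * qPochInvZ q (L - j - c) * qPochInvZ q (j + c) * qPochInvZ q (L - j))) := by
    intro j hj
    rw [mem_range] at hj
    simp only [G]
    rw [← mul_sum, qChuVandermonde hq hroot (by omega), chuValue,
      show (j : ℤ) + (L - j - c) + c = L by ring, Int.toNat_natCast,
      show (L : ℤ) - j - c + c = L - j by ring]
  calc _ = s ^ (c * (c + 1)) *
        (qPoch q q L * ∑ i ∈ range (L + 1), ∑ n ∈ range N, G (i - (n + c)) n) := by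
        rw [sum_congr rfl hterm, ← mul_sum, ← mul_sum]
    _ = s ^ (c * (c + 1)) * qPoch q q L * ∑ j ∈ range (L + 1), ∑ n ∈ range N, G j n := by
        rw [sum_comm, sum_congr rfl fun n _ => hshift n, sum_comm, mul_assoc]
    _ = _ := by
        rw [sum_congr rfl hchu, sq, mul_assoc _ (qPoch q q L), mul_sum, mul_sum, mul_sum]
        refine sum_congr rfl fun j _ => ?_
        ring

theorem sum_range_pascal_merge (hq : q ≠ 0) (hroot : ∀ k : ℕ, 0 < k → q ^ k ≠ 1) (L : ℕ) (a : ℤ) :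
    ∑ j ∈ range (L + 1), q ^ ((j : ℤ) * (j + a + 1)) *
        (qPochInvZ q j * qPochInvZ q (L - j - a) * qPochInvZ q (j + a) * qPochInvZ q (L - j)) +
      q ^ (a + 1) * ∑ j ∈ range (L + 1), q ^ ((j : ℤ) * (j + (a + 1) + 1)) *
        (qPochInvZ q j * qPochInvZ q (L - j - (a + 1)) * qPochInvZ q (j + (a + 1)) *
          qPochInvZ q (L - j)) =
      (1 - q ^ ((L : ℤ) + 1)) * ∑ j ∈ range (L + 1), chuTerm q (a + 1) L (L - a) j := by
  rw [mul_sum, mul_sum, ← sum_add_distrib]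
  refine sum_congr rfl fun j _ => ?_
  simp only [chuTerm]
  have h := qPochInvZ_pascal hq hroot (L + 1) (j + (a + 1))
  rw [show (L : ℤ) + 1 - (j + (a + 1)) = L - a - j by ring,
    show (j : ℤ) + (a + 1) - 1 = j + a by ring,
    show (L : ℤ) + 1 - 1 - (j + (a + 1)) = L - j - (a + 1) by ring] at h
  have hpow : q ^ (a + 1) * q ^ ((j : ℤ) * (j + (a + 1) + 1)) =
      q ^ ((j : ℤ) * (j + (a + 1))) * q ^ ((j : ℤ) + (a + 1)) := by
    simp only [← zpow_add₀ hq]; ring_nf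
  rw [show (L : ℤ) - j - a = L - a - j by ring, show (j : ℤ) + a + 1 = j + (a + 1) by ring]
  linear_combination qPochInvZ q j * qPochInvZ q (L - j) *
    (qPochInvZ q (j + (a + 1)) * qPochInvZ q (L - j - (a + 1)) * hpow -
      q ^ ((j : ℤ) * (j + (a + 1))) * h)

end

theorem Tminus1_summation (L : ℕ) (a : ℤ) (q s : ℂ) (hs : s ^ 2 = q) (hq : q ≠ 0) (hroot : ∀ k : ℕ, 0 < k → q ^ k ≠ 1) :
    (∑' i : ℕ, q ^ ((i + 1) * i / 2) * qBinom (L : ℤ) (i : ℤ) q *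
        (qTriT (-1) i a q s + qTriT (-1) i (a + 1) q s)) =
    q ^ ((a + 1) * a / 2) * qBinom (2 * (L : ℤ) + 1) ((L : ℤ) - a) q := by
  rw [tsum_eq_sum (s := range (L + 1)) fun i hi => ?vanish]
  case vanish =>
    rw [qBinom_eq_mul_qPochInvZ, qPochInvZ_of_neg (m := L - i) (by simp at hi; omega)]
    simp
  simp only [mul_add, sum_add_distrib]
  rw [sum_qBinom_mul_qTriT_neg_one hq hroot hs, sum_qBinom_mul_qTriT_neg_one hq hroot hs]
  have hs_succ : s ^ ((a + 1) * (a + 1 + 1)) = s ^ (a * (a + 1)) * q ^ (a + 1) := by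
    rw [← zpow_two_mul_of_sq_eq hs, ← zpow_add₀ (ne_zero_pow two_ne_zero (hs ▸ hq))]
    ring_nf
  have hmerge := sum_range_pascal_merge hq hroot L a
  rw [qChuVandermonde hq hroot (Nat.lt_succ_self L), chuValue,
    show (L : ℤ) + (L - a) + (a + 1) = (2 * L + 1 : ℕ) by push_cast; ring, Int.toNat_natCast,
    show (L : ℤ) - a + (a + 1) = L + 1 by ring] at hmerge
  have hL := qPoch_mul_qPochInvZ hroot (q := q) L
  have hL1 := qPoch_toNat_mul_qPochInvZ hroot (q := q) (m := (L : ℤ) + 1) (by omega)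
  rw [qPoch_self_toNat_succ q (Int.natCast_nonneg L), Int.toNat_natCast] at hL1
  rw [hs_succ, zpow_triangle hs, qBinom_eq_mul_qPochInvZ,
    show 2 * (L : ℤ) + 1 = (2 * L + 1 : ℕ) by push_cast; ring, Int.toNat_natCast,
    show ((2 * L + 1 : ℕ) : ℤ) - (L - a) = L + (a + 1) by push_cast; ring]
  set K := s ^ (a * (a + 1)) * qPoch q q (2 * L + 1) * qPochInvZ q (L - a) *
    qPochInvZ q (L + (a + 1))
  linear_combination s ^ (a * (a + 1)) * qPoch q q L ^ 2 * hmerge +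
    K * qPoch q q L * (1 - q ^ ((L : ℤ) + 1)) * qPochInvZ q (L + 1) * hL + K * hL1
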